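/- arXiv:2312.11797 — 5 statements merged into one kernel-verified Lean document; each statement's English description precedes it below -/
import Mathlib

section
/- Let T > 0, r ∈ ℝ, γ > 0 with γ ≠ 1, λ ≥ 0, ρ ∈ (−1,1), and let μ, σ, m, ν : [0,T] × ℝ → ℝ be continuous functions with σ(t,x) > 0 for all (t,x). Suppose φ : [0,T] × ℝ → ℝ admits continuous partial derivatives ∂φ/∂t, φ_x, φ_{xx} and satisfies, for all (t,x) ∈ [0,T] × ℝ, ∂φ/∂t + (1−γ)r + m(t,x)φ_x + (1/2)ν(t,x)²(φ_{xx} + φ_x²) + ((1−γ)/(2γ))[(μ(t,x)−r)²/σ(t,x)² + 2ρ(μ(t,x)−r)ν(t,x)φ_x/σ(t,x) + ρ²ν(t,x)²φ_x²] = 0, with φ(T,x) = 0 for all x. Define V(t,w,x) = (w^{1−γ} exp(φ(t,x) − λ(1−γ)(T−t)/2) − 1)/(1−γ) for w > 0, where w^{1−γ} denotes the real power. Then for every t ∈ [0,T), w > 0, x ∈ ℝ: (i) the function u ↦ ∂V/∂t + (r + (μ(t,x)−r)u) w V_w + (1/2)σ(t,x)²(u² + λ/(γσ(t,x)²)) w²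 V_{ww} + m(t,x) V_x + (1/2)ν(t,x)² V_{xx} + ρ ν(t,x) σ(t,x) u w V_{wx} attains its supremum over u ∈ ℝ at u*(t,x) = (μ(t,x)−r)/(γσ(t,x)²) + ρν(t,x)φ_x(t,x)/(γσ(t,x)); (ii) this supremum equals 0; and (iii) V(T,w,x) = (w^{1−γ} − 1)/(1−γ). -/
open Real Set

/-- The expression inside the supremum of the exploratory HJB equation:
`u ↦ ∂V/∂t + (r + (μ−r)u) w V_w + (1/2)σ²(u² + λ/(γσ²)) w² V_ww + m V_x + (1/2)ν² V_xx
  + ρ ν σ u w V_wx`, with all partial derivatives expressed via `deriv`. -/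
noncomputable def HJBterm (V : ℝ → ℝ → ℝ → ℝ) (μ σ m ν : ℝ → ℝ → ℝ)
    (r γ lam ρ : ℝ) (t w x u : ℝ) : ℝ :=
  deriv (fun s => V s w x) t
    + (r + (μ t x - r) * u) * w * deriv (fun w' => V t w' x) w
    + (1/2) * (σ t x)^2 * (u^2 + lam / (γ * (σ t x)^2)) * w^2
        * deriv (fun w' => deriv (fun w'' => V t w'' x) w') w
    + m t x * deriv (fun y => V t w y) x
    + (1/2) * (ν t x)^2 * deriv (fun y => deriv (fun y' => V t w y') y) x
    + ρ * ν t x * σ t x * u * w * deriv (fun y => deriv (fun w' => V t w' y) w) x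

/-!
The candidate is `V = (w ^ p * e ^ ψ - 1) / p` with `p = 1 - γ` and
`ψ = φ - λ p (T - t) / 2`, so every partial derivative of `V` is `w ^ p e ^ ψ` times an
explicit factor, and the HJB expression factors as `w ^ p e ^ ψ` times a concave quadratic
in `u`. Its maximiser is `u*`, its excess over any other `u` is `γσ²/2 (u - u*)²`, and its
maximum value is the left-hand side of the reduced PDE divided by `p` (the `λ`-terms from
`∂ψ/∂t` and from the entropy bonus `λ/(γσ²)` cancel), hence zero.
-/

lemma HasDerivAt.const_mul_exp_sub_one_div {f : ℝ → ℝ} {f' s : ℝ} (hf : HasDerivAt f f' s)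
    (a p : ℝ) :
    HasDerivAt (fun s => (a * Real.exp (f s) - 1) / p) (a * Real.exp (f s) * f' / p) s :=
  (((hf.exp.const_mul a).sub_const 1).div_const p).congr_deriv (by ring)

lemma hasDerivAt_rpow_mul_sub_one_div {p : ℝ} (hp : p ≠ 0) (c : ℝ) {w : ℝ} (hw : 0 < w) :
    HasDerivAt (fun w => (w ^ p * c - 1) / p) (w ^ (p - 1) * c) w :=
  ((((hasDerivAt_rpow_const (Or.inl hw.ne')).mul_const c).sub_const 1).div_const p).congr_deriv
    (by field_simp)

lemma HJBterm_eq_of_eq_rpow_mul_exp {V : ℝ → ℝ → ℝ → ℝ} {p : ℝ} {ψ ψt ψx ψxx : ℝ → ℝ → ℝ}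
    (hV : ∀ t w x, V t w x = (w ^ p * exp (ψ t x) - 1) / p)
    (hp : p ≠ 0) (hψt : ∀ t x, HasDerivAt (fun s => ψ s x) (ψt t x) t)
    (hψx : ∀ t x, HasDerivAt (fun y => ψ t y) (ψx t x) x)
    (hψxx : ∀ t x, HasDerivAt (fun y => ψx t y) (ψxx t x) x)
    (μ σ m ν : ℝ → ℝ → ℝ) (r γ lam ρ t x u : ℝ) {w : ℝ} (hw : 0 < w) :
    HJBterm V μ σ m ν r γ lam ρ t w x u = w ^ p * exp (ψ t x) *
      (ψt t x / p + (r + (μ t x - r) * u)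
        + (p - 1) / 2 * σ t x ^ 2 * (u ^ 2 + lam / (γ * σ t x ^ 2))
        + (m t x * ψx t x + 1 / 2 * ν t x ^ 2 * (ψxx t x + ψx t x ^ 2)) / p
        + ρ * ν t x * σ t x * u * ψx t x) := by
  simp only [HJBterm, hV]
  have hVw : ∀ y, ∀ w > 0, HasDerivAt (fun w => (w ^ p * exp (ψ t y) - 1) / p)
      (w ^ (p - 1) * exp (ψ t y)) w :=
    fun y w hw => hasDerivAt_rpow_mul_sub_one_div hp _ hw
  have hVww : deriv (fun w => deriv (fun w => (w ^ p * exp (ψ t x) - 1) / p) w) w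
      = (p - 1) * w ^ (p - 1 - 1) * exp (ψ t x) := by
    rw [(Filter.eventuallyEq_of_mem (Ioi_mem_nhds hw) fun w hw => (hVw x w hw).deriv).deriv_eq]
    exact ((hasDerivAt_rpow_const (Or.inl hw.ne')).mul_const _).deriv
  have hVx : ∀ y, HasDerivAt (fun y => (w ^ p * exp (ψ t y) - 1) / p)
      (w ^ p * exp (ψ t y) * ψx t y / p) y :=
    fun y => (hψx t y).const_mul_exp_sub_one_div _ _
  have hVxx : deriv (fun y => deriv (fun y => (w ^ p * exp (ψ t y) - 1) / p) y) x
      = w ^ p * exp (ψ t x) * (ψxx t x + ψx t x ^ 2) / p := by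
    simp only [fun y => (hVx y).deriv]
    exact ((((hψx t x).exp.const_mul _).mul (hψxx t x)).div_const p).deriv.trans (by ring)
  have hVwx : deriv (fun y => deriv (fun w => (w ^ p * exp (ψ t y) - 1) / p) w) x
      = w ^ (p - 1) * exp (ψ t x) * ψx t x := by
    simp only [fun y => (hVw y w hw).deriv]
    exact ((hψx t x).exp.const_mul _).deriv.trans (mul_assoc ..).symm
  rw [((hψt t x).const_mul_exp_sub_one_div _ _).deriv, (hVw x w hw).deriv, hVww,
    (hVx x).deriv, hVxx, hVwx]
  simp only [rpow_sub_one hw.ne']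
  field_simp
  ring

lemma mul_sub_div_two_mul_sq_le_vertex {a : ℝ} (ha : 0 < a) (b u : ℝ) :
    b * u - a / 2 * u ^ 2 ≤ b * (b / a) - a / 2 * (b / a) ^ 2 := by
  have hsq : b * (b / a) - a / 2 * (b / a) ^ 2 - (b * u - a / 2 * u ^ 2)
      = a / 2 * (u - b / a) ^ 2 := by
    field_simp
    ring
  rw [← sub_nonneg, hsq]
  positivity

lemma HJBterm_crra_eq {T r γ lam ρ : ℝ} {μ σ m ν φ φt φx φxx : ℝ → ℝ → ℝ}
    {V : ℝ → ℝ → ℝ → ℝ} (hγ : γ ≠ 0) (hγ1 : γ ≠ 1)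
    (hφt : ∀ t x, HasDerivAt (fun s => φ s x) (φt t x) t)
    (hφx : ∀ t x, HasDerivAt (fun y => φ t y) (φx t x) x)
    (hφxx : ∀ t x, HasDerivAt (fun y => φx t y) (φxx t x) x)
    (hV : ∀ t w x, V t w x =
      (w ^ (1 - γ) * Real.exp (φ t x - lam * (1 - γ) * (T - t) / 2) - 1) / (1 - γ))
    {t x w : ℝ} (hσ : σ t x ≠ 0) (hw : 0 < w) (u : ℝ) :
    HJBterm V μ σ m ν r γ lam ρ t w x u
      = w ^ (1 - γ) * Real.exp (φ t x - lam * (1 - γ) * (T - t) / 2) *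
        ((φt t x + m t x * φx t x + 1 / 2 * ν t x ^ 2 * (φxx t x + φx t x ^ 2)) / (1 - γ) + r
          + ((μ t x - r + ρ * ν t x * σ t x * φx t x) * u - γ * σ t x ^ 2 / 2 * u ^ 2)) := by
  have h1γ : 1 - γ ≠ 0 := sub_ne_zero.2 hγ1.symm
  have hψt : ∀ t x, HasDerivAt (fun s => φ s x - lam * (1 - γ) * (T - s) / 2)
      (φt t x + lam * (1 - γ) / 2) t := fun t x =>
    ((hφt t x).sub ((((hasDerivAt_id t).const_sub T).const_mul _).div_const 2)).congr_deriv
      (by ring)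
  rw [HJBterm_eq_of_eq_rpow_mul_exp hV h1γ hψt (fun t x => (hφx t x).sub_const _) hφxx _ _ _ _
    _ _ _ _ _ _ _ hw]
  field_simp
  ring

theorem stmt0_general
    (T r γ lam ρ : ℝ) (hγ : 0 < γ) (hγ1 : γ ≠ 1)
    (μ σ m ν : ℝ → ℝ → ℝ)
    (hσpos : ∀ t x, 0 < σ t x)
    (φ φt φx φxx : ℝ → ℝ → ℝ)
    (hφt : ∀ t x, HasDerivAt (fun s => φ s x) (φt t x) t)
    (hφx : ∀ t x, HasDerivAt (fun y => φ t y) (φx t x) x)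
    (hφxx : ∀ t x, HasDerivAt (fun y => φx t y) (φxx t x) x)
    (hPDE : ∀ t ∈ Set.Icc 0 T, ∀ x : ℝ,
      φt t x + (1 - γ) * r + m t x * φx t x
        + (1/2) * (ν t x)^2 * (φxx t x + (φx t x)^2)
        + ((1 - γ) / (2 * γ)) *
            ((μ t x - r)^2 / (σ t x)^2
              + 2 * ρ * (μ t x - r) * ν t x * φx t x / σ t x
              + ρ^2 * (ν t x)^2 * (φx t x)^2) = 0)
    (hterm : ∀ x : ℝ, φ T x = 0)
    (V : ℝ → ℝ → ℝ → ℝ)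
    (hV : ∀ t w x, V t w x =
      (w ^ (1 - γ) * Real.exp (φ t x - lam * (1 - γ) * (T - t) / 2) - 1) / (1 - γ)) :
    ∀ t ∈ Set.Ico 0 T, ∀ w : ℝ, 0 < w → ∀ x : ℝ,
      (∀ u : ℝ, HJBterm V μ σ m ν r γ lam ρ t w x u ≤
        HJBterm V μ σ m ν r γ lam ρ t w x
          ((μ t x - r) / (γ * (σ t x)^2) + ρ * ν t x * φx t x / (γ * σ t x))) ∧
      HJBterm V μ σ m ν r γ lam ρ t w x
          ((μ t x - r) / (γ * (σ t x)^2) + ρ * ν t x * φx t x / (γ * σ t x)) = 0 ∧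
      V T w x = (w ^ (1 - γ) - 1) / (1 - γ) := by
  intro t ht w hw x
  have hσ : 0 < σ t x := hσpos t x
  have hustar : (μ t x - r) / (γ * (σ t x)^2) + ρ * ν t x * φx t x / (γ * σ t x)
      = (μ t x - r + ρ * ν t x * σ t x * φx t x) / (γ * σ t x ^ 2) := by
    field_simp
  simp only [HJBterm_crra_eq hγ.ne' hγ1 hφt hφx hφxx hV hσ.ne' hw, hustar]
  refine ⟨fun u => ?_, ?_, ?_⟩
  · gcongr _ * (_ + ?_)
    exact mul_sub_div_two_mul_sq_le_vertex (by positivity) _ _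
  · refine mul_eq_zero_of_right _ ?_
    have h1γ : 1 - γ ≠ 0 := sub_ne_zero.2 (Ne.symm hγ1)
    rw [← zero_div (1 - γ), ← hPDE t (Ico_subset_Icc_self ht) x]
    field_simp
    ring
  · rw [hV, hterm]
    norm_num

/-- Theorem 1 (verification part): the function
`V(t,w,x) = (w^{1−γ} exp(φ(t,x) − λ(1−γ)(T−t)/2) − 1)/(1−γ)` built from a classical
solution `φ` of the reduced PDE solves the exploratory HJB equation, with the supremum
attained at `u*(t,x) = (μ−r)/(γσ²) + ρνφ_x/(γσ)`, and has the CRRA terminal condition. -/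
theorem stmt0
    (T r γ lam ρ : ℝ) (hT : 0 < T) (hγ : 0 < γ) (hγ1 : γ ≠ 1) (hlam : 0 ≤ lam)
    (hρ : ρ ∈ Set.Ioo (-1 : ℝ) 1)
    (μ σ m ν : ℝ → ℝ → ℝ)
    (hμc : ContinuousOn (fun p : ℝ × ℝ => μ p.1 p.2) (Set.Icc 0 T ×ˢ Set.univ))
    (hσc : ContinuousOn (fun p : ℝ × ℝ => σ p.1 p.2) (Set.Icc 0 T ×ˢ Set.univ))
    (hmc : ContinuousOn (fun p : ℝ × ℝ => m p.1 p.2) (Set.Icc 0 T ×ˢ Set.univ))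
    (hνc : ContinuousOn (fun p : ℝ × ℝ => ν p.1 p.2) (Set.Icc 0 T ×ˢ Set.univ))
    (hσpos : ∀ t x, 0 < σ t x)
    (φ φt φx φxx : ℝ → ℝ → ℝ)
    (hφt : ∀ t x, HasDerivAt (fun s => φ s x) (φt t x) t)
    (hφx : ∀ t x, HasDerivAt (fun y => φ t y) (φx t x) x)
    (hφxx : ∀ t x, HasDerivAt (fun y => φx t y) (φxx t x) x)
    (hφtc : Continuous (fun p : ℝ × ℝ => φt p.1 p.2))
    (hφxc : Continuous (fun p : ℝ × ℝ => φx p.1 p.2))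
    (hφxxc : Continuous (fun p : ℝ × ℝ => φxx p.1 p.2))
    (hPDE : ∀ t ∈ Set.Icc 0 T, ∀ x : ℝ,
      φt t x + (1 - γ) * r + m t x * φx t x
        + (1/2) * (ν t x)^2 * (φxx t x + (φx t x)^2)
        + ((1 - γ) / (2 * γ)) *
            ((μ t x - r)^2 / (σ t x)^2
              + 2 * ρ * (μ t x - r) * ν t x * φx t x / σ t x
              + ρ^2 * (ν t x)^2 * (φx t x)^2) = 0)
    (hterm : ∀ x : ℝ, φ T x = 0)
    (V : ℝ → ℝ → ℝ → ℝ)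
    (hV : ∀ t w x, V t w x =
      (w ^ (1 - γ) * Real.exp (φ t x - lam * (1 - γ) * (T - t) / 2) - 1) / (1 - γ)) :
    ∀ t ∈ Set.Ico 0 T, ∀ w : ℝ, 0 < w → ∀ x : ℝ,
      (∀ u : ℝ, HJBterm V μ σ m ν r γ lam ρ t w x u ≤
        HJBterm V μ σ m ν r γ lam ρ t w x
          ((μ t x - r) / (γ * (σ t x)^2) + ρ * ν t x * φx t x / (γ * σ t x))) ∧
      HJBterm V μ σ m ν r γ lam ρ t w x
          ((μ t x - r) / (γ * (σ t x)^2) + ρ * ν t x * φx t x / (γ * σ t x)) = 0 ∧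
      V T w x = (w ^ (1 - γ) - 1) / (1 - γ) :=
  stmt0_general T r γ lam ρ hγ hγ1 μ σ m ν hσpos φ φt φx φxx hφt hφx hφxx hPDE hterm V hV
end

section
/- Let ξ be a square-integrable real random variable on a probability space, and let θ, θ* ∈ ℝ, c > 0, ℓ ∈ (0, 1/c), β ≥ 0, ζ ≥ 0 be real numbers satisfying |E[ξ]| ≤ β and Var[ξ] = E[ξ²] − (E[ξ])² ≤ ζ. Then E[(θ − θ* + ℓ(c(θ*−θ) + ξ))²] ≤ (1 − ℓc)(1 − ℓc + ℓβ)(θ − θ*)² + ℓ(1 − ℓc)β + ℓ²(β² + ζ). -/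
/-! With `d = θ - θ*`, the updated error is `(1 - ℓc) d + ℓ ξ`, whose mean square is
`(1 - ℓc)² d² + 2 (1 - ℓc) ℓ d E[ξ] + ℓ² E[ξ²]`. The cross term is controlled by
`2 d E[ξ] ≤ β (d² + 1)` (from `2|d| ≤ d² + 1`), and `E[ξ²] ≤ β² + ζ` is variance plus squared
bias. -/

open MeasureTheory ProbabilityTheory

theorem integral_sq_const_add_const_mul {Ω : Type*} {m : MeasurableSpace Ω} {μ : Measure Ω}
    [IsProbabilityMeasure μ] {X : Ω → ℝ} (hX : MemLp X 2 μ) (a b : ℝ) :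
    ∫ ω, (a + b * X ω) ^ 2 ∂μ =
      a ^ 2 + 2 * a * b * (∫ ω, X ω ∂μ) + b ^ 2 * ∫ ω, X ω ^ 2 ∂μ := by
  have hX1 : Integrable X μ := hX.integrable one_le_two
  have hX2 : Integrable (fun ω => X ω ^ 2) μ := hX.integrable_sq
  calc ∫ ω, (a + b * X ω) ^ 2 ∂μ
      = ∫ ω, (a ^ 2 + 2 * a * b * X ω) + b ^ 2 * X ω ^ 2 ∂μ := by
        congr 1 with ω; ring
    _ = a ^ 2 + 2 * a * b * (∫ ω, X ω ∂μ) + b ^ 2 * ∫ ω, X ω ^ 2 ∂μ := by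
        rw [integral_add (f := fun ω => a ^ 2 + 2 * a * b * X ω)
          ((integrable_const _).add (hX1.const_mul _)) (hX2.const_mul _),
          integral_add (integrable_const _) (hX1.const_mul _), integral_const,
          integral_const_mul, integral_const_mul, probReal_univ, one_smul]

theorem two_mul_mul_le_of_abs_le {m β : ℝ} (hm : |m| ≤ β) (d : ℝ) :
    2 * d * m ≤ β * (d ^ 2 + 1) := by
  have hβ : 0 ≤ β := (abs_nonneg m).trans hm
  calc 2 * d * m ≤ 2 * |d| * |m| := by
        rw [mul_assoc, mul_assoc, ← abs_mul]; gcongr; exact le_abs_self _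
    _ ≤ 2 * |d| * β := by gcongr
    _ ≤ β * (d ^ 2 + 1) := by nlinarith [sq_nonneg (|d| - 1), sq_abs d]

theorem stmt6_general {Ω : Type*} [MeasureSpace Ω] [IsProbabilityMeasure (ℙ : Measure Ω)]
    (ξ : Ω → ℝ) (hξ : MemLp ξ 2 (ℙ : Measure Ω))
    (θ θs c ℓ β ζ : ℝ) (hc : 0 < c) (hℓ : ℓ ∈ Set.Ioo (0 : ℝ) (1 / c))
    (hbias : |∫ ω, ξ ω| ≤ β)
    (hvar : (∫ ω, (ξ ω)^2) - (∫ ω, ξ ω)^2 ≤ ζ) :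
    ∫ ω, (θ - θs + ℓ * (c * (θs - θ) + ξ ω))^2 ≤
      (1 - ℓ * c) * (1 - ℓ * c + ℓ * β) * (θ - θs)^2
        + ℓ * (1 - ℓ * c) * β + ℓ^2 * (β^2 + ζ) := by
  obtain ⟨hℓ_pos, hℓ_lt⟩ := hℓ
  have hstep : 0 ≤ ℓ * (1 - ℓ * c) :=
    mul_nonneg hℓ_pos.le (by rw [lt_div_iff₀ hc] at hℓ_lt; linarith)
  have hsecond_moment : ∫ ω, ξ ω ^ 2 ≤ β ^ 2 + ζ := by
    nlinarith [sq_le_sq' (abs_le.mp hbias).1 (abs_le.mp hbias).2]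
  have hcross := mul_le_mul_of_nonneg_left (two_mul_mul_le_of_abs_le hbias (θ - θs)) hstep
  calc ∫ ω, (θ - θs + ℓ * (c * (θs - θ) + ξ ω))^2
      = ∫ ω, ((1 - ℓ * c) * (θ - θs) + ℓ * ξ ω) ^ 2 := by
        congr 1 with ω; ring
    _ = ((1 - ℓ * c) * (θ - θs)) ^ 2 + 2 * ((1 - ℓ * c) * (θ - θs)) * ℓ * (∫ ω, ξ ω)
          + ℓ ^ 2 * ∫ ω, ξ ω ^ 2 := integral_sq_const_add_const_mul hξ _ _
    _ ≤ _ := by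
        linarith [mul_le_mul_of_nonneg_left hsecond_moment (sq_nonneg ℓ)]

/-- One-step mean-square error recursion in the proof of Theorem 4: for a
stochastic-approximation update `θ ↦ θ + ℓ(c(θ*−θ) + ξ)` with noise `ξ` of bias at most
`β` and variance at most `ζ`, the expected squared distance to `θ*` contracts as stated. -/
theorem stmt6 {Ω : Type*} [MeasureSpace Ω] [IsProbabilityMeasure (ℙ : Measure Ω)]
    (ξ : Ω → ℝ) (hξ : MemLp ξ 2 (ℙ : Measure Ω))
    (θ θs c ℓ β ζ : ℝ) (hc : 0 < c) (hℓ : ℓ ∈ Set.Ioo (0 : ℝ) (1 / c))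
    (hβ : 0 ≤ β) (hζ : 0 ≤ ζ)
    (hbias : |∫ ω, ξ ω| ≤ β)
    (hvar : (∫ ω, (ξ ω)^2) - (∫ ω, ξ ω)^2 ≤ ζ) :
    ∫ ω, (θ - θs + ℓ * (c * (θs - θ) + ξ ω))^2 ≤
      (1 - ℓ * c) * (1 - ℓ * c + ℓ * β) * (θ - θs)^2
        + ℓ * (1 - ℓ * c) * β + ℓ^2 * (β^2 + ζ) :=
  stmt6_general ξ hξ θ θs c ℓ β ζ hc hℓ hbias hvar
end

section
/- Let w₀ > 0, μ, r ∈ ℝ, σ > 0, θ ∈ ℝ, γ > 0 with γ ≠ 1, and T > 0. Let Z be a Gaussian random variable with mean log w₀ + (r + (μ−r)θ − (1/2)σ²θ²)T and variance σ²θ²T. Set θ* = (μ−r)/(γσ²) and define V₀(w) = (w^{1−γ} exp((r + (μ−r)²/(2γσ²))(1−γ)T) − 1)/(1−γ) for w > 0. Then E[(exp((1−γ)Z) − 1)/(1−γ)] = V₀( w₀ · exp(−γTσ²(θ−θ*)²/2) ). Consequently, the number Δ < 1 satisfying E[(exp((1−γ)Z) − 1)/(1−γ)] = V₀(w₀(1−Δ))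 is Δ = 1 − exp(−(Tγσ²/2)(θ−θ*)²), and it satisfies Δ ≤ (Tγσ²/2)(θ−θ*)². -/
open MeasureTheory ProbabilityTheory Real
open scoped NNReal

/-!
`log W_T` is Gaussian, so the expected CRRA utility is an exponential moment of a Gaussian,
`E[exp((1-γ)Z)] = exp((1-γ)m + (1-γ)²v/2)`. Completing the square in `θ` turns the resulting
certainty-equivalent growth rate `r + (μ-r)θ - γσ²θ²/2` into the Merton rate
`r + (μ-r)²/(2γσ²)` minus `γσ²(θ-θ*)²/2`, and the deficit is absorbed into the initial wealth.
Uniqueness of `Δ` is injectivity of `w ↦ w^(1-γ)` on `[0, ∞)`, and the bound is `1 - e^{-x} ≤ x`.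
-/

lemma integral_exp_sub_one_div_gaussianReal (m t : ℝ) (v : ℝ≥0) :
    ∫ z, (rexp (t * z) - 1) / t ∂gaussianReal m v = (rexp (m * t + v * t ^ 2 / 2) - 1) / t := by
  rw [integral_div, integral_sub (integrable_exp_mul_gaussianReal t) (integrable_const 1),
    ← mgf, mgf_fun_id_gaussianReal]
  simp

lemma merton_rate_complete_square (μ r θ : ℝ) {σ γ : ℝ} (hσ : σ ≠ 0) (hγ : γ ≠ 0) :
    r + (μ - r) * θ - γ * σ ^ 2 * θ ^ 2 / 2
      = r + (μ - r) ^ 2 / (2 * γ * σ ^ 2) - γ * σ ^ 2 * (θ - (μ - r) / (γ * σ ^ 2)) ^ 2 / 2 := by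
  field_simp
  ring

/-- The optimal Merton value `V₀(w)`. -/
noncomputable def mertonValue (μ r σ γ T w : ℝ) : ℝ :=
  (w ^ (1 - γ) * rexp ((r + (μ - r) ^ 2 / (2 * γ * σ ^ 2)) * (1 - γ) * T) - 1) / (1 - γ)

lemma mertonValue_injOn (μ r σ T : ℝ) {γ : ℝ} (hγ : γ ≠ 1) :
    Set.InjOn (mertonValue μ r σ γ T) (Set.Ici 0) := by
  intro w hw w' hw' h
  have hγ' : 1 - γ ≠ 0 := sub_ne_zero.mpr hγ.symm
  simp only [mertonValue] at h
  rw [div_left_inj' hγ', sub_left_inj, mul_left_inj' (exp_ne_zero _)] at h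
  exact (rpow_left_inj hw hw' hγ').mp h

lemma integral_crra_gaussianReal_eq_mertonValue (w₀ μ r σ θ γ T : ℝ) (hw₀ : 0 < w₀)
    (hσ : σ ≠ 0) (hγ : γ ≠ 0) (hT : 0 ≤ T) :
    ∫ z, (rexp ((1 - γ) * z) - 1) / (1 - γ)
        ∂gaussianReal (log w₀ + (r + (μ - r) * θ - (1/2) * σ^2 * θ^2) * T)
          (σ^2 * θ^2 * T).toNNReal
      = mertonValue μ r σ γ T
          (w₀ * rexp (-(γ * T * σ^2 * (θ - (μ - r) / (γ * σ^2))^2 / 2))) := by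
  rw [integral_exp_sub_one_div_gaussianReal, Real.coe_toNNReal _ (by positivity), mertonValue,
    rpow_def_of_pos (by positivity), log_mul hw₀.ne' (exp_ne_zero _), log_exp, ← exp_add]
  congr 3
  linear_combination (1 - γ) * T * merton_rate_complete_square μ r θ hσ hγ

/-- Lemma EC.1: in the Black–Scholes market, the expected CRRA utility of the lognormal
terminal wealth of the constant-fraction policy `θ` (with `log W_T` Gaussian with mean
`log w₀ + (r + (μ−r)θ − σ²θ²/2)T` and variance `σ²θ²T`) equals the optimal Merton value
`V₀` at the reduced initial wealth `w₀ exp(−γTσ²(θ−θ*)²/2)`; consequently the equivalent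
relative wealth loss is `Δ = 1 − exp(−(Tγσ²/2)(θ−θ*)²) ≤ (Tγσ²/2)(θ−θ*)²`. -/
theorem stmt7 (w₀ μ r σ θ γ T : ℝ) (hw₀ : 0 < w₀) (hσ : 0 < σ) (hγ : 0 < γ)
    (hγ1 : γ ≠ 1) (hT : 0 < T)
    (θs : ℝ) (hθs : θs = (μ - r) / (γ * σ^2))
    (V₀ : ℝ → ℝ)
    (hV₀ : ∀ w : ℝ, V₀ w =
      (w ^ (1 - γ) * Real.exp ((r + (μ - r)^2 / (2 * γ * σ^2)) * (1 - γ) * T) - 1) / (1 - γ))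
    (Δb : ℝ) (hΔb : Δb = 1 - Real.exp (-(T * γ * σ^2 / 2) * (θ - θs)^2)) :
    (∫ z, (Real.exp ((1 - γ) * z) - 1) / (1 - γ)
        ∂(gaussianReal (Real.log w₀ + (r + (μ - r) * θ - (1/2) * σ^2 * θ^2) * T)
            (σ^2 * θ^2 * T).toNNReal))
      = V₀ (w₀ * Real.exp (-(γ * T * σ^2 * (θ - θs)^2 / 2))) ∧
    Δb < 1 ∧
    (∫ z, (Real.exp ((1 - γ) * z) - 1) / (1 - γ)
        ∂(gaussianReal (Real.log w₀ + (r + (μ - r) * θ - (1/2) * σ^2 * θ^2) * T)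
            (σ^2 * θ^2 * T).toNNReal))
      = V₀ (w₀ * (1 - Δb)) ∧
    (∀ Δ : ℝ, Δ < 1 →
      (∫ z, (Real.exp ((1 - γ) * z) - 1) / (1 - γ)
          ∂(gaussianReal (Real.log w₀ + (r + (μ - r) * θ - (1/2) * σ^2 * θ^2) * T)
              (σ^2 * θ^2 * T).toNNReal))
        = V₀ (w₀ * (1 - Δ)) → Δ = Δb) ∧
    Δb ≤ (T * γ * σ^2 / 2) * (θ - θs)^2 := by
  obtain rfl : V₀ = mertonValue μ r σ γ T := funext hV₀
  subst hθs
  have hvalue :=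
    integral_crra_gaussianReal_eq_mertonValue w₀ μ r σ θ γ T hw₀ hσ.ne' hγ.ne' hT.le
  have hwealth :
      w₀ * (1 - Δb) = w₀ * rexp (-(γ * T * σ ^ 2 * (θ - (μ - r) / (γ * σ ^ 2)) ^ 2 / 2)) := by
    rw [hΔb]
    ring_nf
  have hΔb_lt : Δb < 1 := by
    rw [hΔb]
    linarith [exp_pos (-(T * γ * σ ^ 2 / 2) * (θ - (μ - r) / (γ * σ ^ 2)) ^ 2)]
  refine ⟨hvalue, hΔb_lt, hwealth ▸ hvalue, fun Δ hΔ h => ?_, ?_⟩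
  · rw [hvalue, ← hwealth] at h
    have hw := mertonValue_injOn μ r σ T hγ1 (mul_pos hw₀ (sub_pos.2 hΔb_lt)).le
      (mul_pos hw₀ (sub_pos.2 hΔ)).le h
    linarith [mul_left_cancel₀ hw₀.ne' hw]
  · rw [hΔb, neg_mul]
    linarith [add_one_le_exp (-(T * γ * σ ^ 2 / 2 * (θ - (μ - r) / (γ * σ ^ 2)) ^ 2))]
end

section
/- Let γ > 0 with γ ≠ 1, ι ∈ ℝ, δ ∈ ℝ, ν̄ > 0, ρ ∈ (−1,1), T > 0, and assume D := ι²γ − (1−γ)(2ριδν̄ + δ²ν̄²) > 0. Set q = ν̄²(ρ² + γ(1−ρ²)) (which is positive), ψ₀ = −√(D/γ), ψ₁ = (1−γ)δ²/q, ψ₂ = (ιγ − (1−γ)δν̄ρ + √(γD))/q, ψ₃ = (ιγ − (1−γ)δν̄ρ − √(γD))/q, and define A₁(t) = ψ₁(e^{ψ₀(T−t)} − 1)/(−ψ₂ + ψ₃ e^{ψ₀(T−t)}). Assume −ψ₂ + ψ₃ e^{ψ₀(T−t)} ≠ 0 for all t ∈ [0,T]. Then A₁(T) = 0, and for every t ∈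 [0,T] the function A₁ is differentiable at t with A₁′(t) − ι A₁(t) + (1/2)ν̄² A₁(t)² + ((1−γ)/(2γ))( δ² + 2ρδν̄ A₁(t) + ρ²ν̄² A₁(t)² ) = 0. -/
/-!
The right-hand side of the Riccati equation is the quadratic `-(q / 2γ) (A - ψ₂) (A - ψ₃)`:
`ψ₂, ψ₃` are its roots, with Vieta relations `ψ₂ ψ₃ = ψ₁` and `ψ₀ = (q / 2γ) (ψ₃ - ψ₂)`.
An autonomous Riccati equation `f' = -k (f - a) (f - b)` is solved by the Möbius image
`a b (E - 1) / (b E - a)` of `E = exp (k (b - a) (T - t))`, which vanishes at `t = T`.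
-/

open Real

noncomputable def riccatiSolution (a b c T t : ℝ) : ℝ :=
  a * b * (exp (c * (T - t)) - 1) / (-a + b * exp (c * (T - t)))

theorem riccatiSolution_self (a b c T : ℝ) : riccatiSolution a b c T T = 0 := by
  simp [riccatiSolution]

theorem hasDerivAt_riccatiSolution {a b k T t : ℝ}
    (hden : -a + b * exp (k * (b - a) * (T - t)) ≠ 0) :
    HasDerivAt (riccatiSolution a b (k * (b - a)) T)
      (-k * (riccatiSolution a b (k * (b - a)) T t - a) *
        (riccatiSolution a b (k * (b - a)) T t - b)) t := by
  set c := k * (b - a)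
  have hexp : HasDerivAt (fun s => exp (c * (T - s))) (-c * exp (c * (T - t))) t := by
    simpa [mul_comm] using (((hasDerivAt_id t).const_sub T).const_mul c).exp
  refine (((hexp.sub_const 1).const_mul (a * b)).div ((hexp.const_mul b).const_add (-a))
    hden).congr_deriv ?_
  simp only [riccatiSolution, c]
  generalize exp (k * (b - a) * (T - t)) = E at hden ⊢
  field_simp
  ring

theorem sqrt_div_eq_sqrt_mul_div {x y : ℝ} (hy : 0 < y) : √(x / y) = √(y * x) / y := by
  rw [show y * x = y ^ 2 * (x / y) by field_simp, sqrt_mul (sq_nonneg y), sqrt_sq hy.le]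
  field_simp

theorem merton_riccati_eq_neg_mul_sub_mul_sub {γ ι δ nubar ρ q ψ₂ ψ₃ : ℝ} (hγ : γ ≠ 0)
    (hq : q = nubar ^ 2 * (ρ ^ 2 + γ * (1 - ρ ^ 2)))
    (hsum : q * (ψ₂ + ψ₃) = 2 * (ι * γ - (1 - γ) * δ * nubar * ρ))
    (hprod : q * (ψ₂ * ψ₃) = (1 - γ) * δ ^ 2) (x : ℝ) :
    ι * x - (1/2) * nubar ^ 2 * x ^ 2
        - ((1 - γ) / (2 * γ)) * (δ ^ 2 + 2 * ρ * δ * nubar * x + ρ ^ 2 * nubar ^ 2 * x ^ 2)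
      = -(q / (2 * γ)) * (x - ψ₂) * (x - ψ₃) := by
  field_simp
  linear_combination (-x) * hsum + hprod + x ^ 2 * hq

theorem stmt14_general (γ ι δ nubar ρ T : ℝ) (hγ : 0 < γ) (hnubar : 0 < nubar)
    (hρ : ρ ∈ Set.Ioo (-1 : ℝ) 1)
    (D : ℝ) (hD : D = ι^2 * γ - (1 - γ) * (2 * ρ * ι * δ * nubar + δ^2 * nubar^2))
    (hDpos : 0 < D)
    (q ψ₀ ψ₁ ψ₂ ψ₃ : ℝ)
    (hq : q = nubar^2 * (ρ^2 + γ * (1 - ρ^2)))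
    (hψ₀ : ψ₀ = -Real.sqrt (D / γ))
    (hψ₁ : ψ₁ = (1 - γ) * δ^2 / q)
    (hψ₂ : ψ₂ = (ι * γ - (1 - γ) * δ * nubar * ρ + Real.sqrt (γ * D)) / q)
    (hψ₃ : ψ₃ = (ι * γ - (1 - γ) * δ * nubar * ρ - Real.sqrt (γ * D)) / q)
    (A : ℝ → ℝ)
    (hA : ∀ t : ℝ, A t =
      ψ₁ * (Real.exp (ψ₀ * (T - t)) - 1) / (-ψ₂ + ψ₃ * Real.exp (ψ₀ * (T - t))))
    (hden : ∀ t ∈ Set.Icc (0 : ℝ) T, -ψ₂ + ψ₃ * Real.exp (ψ₀ * (T - t)) ≠ 0) :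
    A T = 0 ∧
    ∀ t ∈ Set.Icc (0 : ℝ) T, DifferentiableAt ℝ A t ∧
      deriv A t - ι * A t + (1/2) * nubar^2 * (A t)^2
        + ((1 - γ) / (2 * γ)) * (δ^2 + 2 * ρ * δ * nubar * A t + ρ^2 * nubar^2 * (A t)^2)
        = 0 := by
  have hq0 : q ≠ 0 := by
    have hρ2 : ρ ^ 2 < 1 := by rw [sq_lt_one_iff_abs_lt_one, abs_lt]; exact hρ
    rw [hq]; have := mul_pos hγ (sub_pos.2 hρ2); positivity
  have hs : √(γ * D) ^ 2 = γ * D := sq_sqrt (by positivity)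
  have hsum : q * (ψ₂ + ψ₃) = 2 * (ι * γ - (1 - γ) * δ * nubar * ρ) := by
    rw [hψ₂, hψ₃]; field_simp; ring
  have hprod : q * (ψ₂ * ψ₃) = (1 - γ) * δ ^ 2 := by
    rw [hψ₂, hψ₃]; field_simp; linear_combination -hs - γ * hD - (1 - γ) * δ ^ 2 * hq
  have hψ₀' : ψ₀ = q / (2 * γ) * (ψ₃ - ψ₂) := by
    rw [hψ₀, hψ₂, hψ₃, sqrt_div_eq_sqrt_mul_div hγ]; field_simp; ring
  have hψ₁' : ψ₁ = ψ₂ * ψ₃ := by rw [hψ₁, ← hprod]; field_simp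
  have hAeq : A = riccatiSolution ψ₂ ψ₃ (q / (2 * γ) * (ψ₃ - ψ₂)) T := by
    funext t; rw [hA, riccatiSolution, hψ₁', hψ₀']
  refine ⟨hAeq ▸ riccatiSolution_self _ _ _ _, fun t ht => ?_⟩
  have hderiv := hasDerivAt_riccatiSolution (hψ₀' ▸ hden t ht)
  rw [← hAeq] at hderiv
  refine ⟨hderiv.differentiableAt, ?_⟩
  rw [hderiv.deriv, ← merton_riccati_eq_neg_mul_sub_mul_sub hγ.ne' hq hsum hprod]
  ring

/-- Explicit solution (16) of the Riccati ODE (15) of Lemma 1: under the well-posedness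
condition `D = ι²γ − (1−γ)(2ριδν̄ + δ²ν̄²) > 0`, the function
`A₁(t) = ψ₁(e^{ψ₀(T−t)} − 1)/(−ψ₂ + ψ₃ e^{ψ₀(T−t)})` satisfies `A₁(T) = 0` and
`A₁′ − ιA₁ + (1/2)ν̄²A₁² + ((1−γ)/(2γ))(δ² + 2ρδν̄A₁ + ρ²ν̄²A₁²) = 0` on `[0,T]`. -/
theorem stmt14 (γ ι δ nubar ρ T : ℝ) (hγ : 0 < γ) (hγ1 : γ ≠ 1) (hnubar : 0 < nubar)
    (hρ : ρ ∈ Set.Ioo (-1 : ℝ) 1) (hT : 0 < T)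
    (D : ℝ) (hD : D = ι^2 * γ - (1 - γ) * (2 * ρ * ι * δ * nubar + δ^2 * nubar^2))
    (hDpos : 0 < D)
    (q ψ₀ ψ₁ ψ₂ ψ₃ : ℝ)
    (hq : q = nubar^2 * (ρ^2 + γ * (1 - ρ^2)))
    (hψ₀ : ψ₀ = -Real.sqrt (D / γ))
    (hψ₁ : ψ₁ = (1 - γ) * δ^2 / q)
    (hψ₂ : ψ₂ = (ι * γ - (1 - γ) * δ * nubar * ρ + Real.sqrt (γ * D)) / q)
    (hψ₃ : ψ₃ = (ι * γ - (1 - γ) * δ * nubar * ρ - Real.sqrt (γ * D)) / q)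
    (A : ℝ → ℝ)
    (hA : ∀ t : ℝ, A t =
      ψ₁ * (Real.exp (ψ₀ * (T - t)) - 1) / (-ψ₂ + ψ₃ * Real.exp (ψ₀ * (T - t))))
    (hden : ∀ t ∈ Set.Icc (0 : ℝ) T, -ψ₂ + ψ₃ * Real.exp (ψ₀ * (T - t)) ≠ 0) :
    A T = 0 ∧
    ∀ t ∈ Set.Icc (0 : ℝ) T, DifferentiableAt ℝ A t ∧
      deriv A t - ι * A t + (1/2) * nubar^2 * (A t)^2
        + ((1 - γ) / (2 * γ)) * (δ^2 + 2 * ρ * δ * nubar * A t + ρ^2 * nubar^2 * (A t)^2)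
        = 0 :=
  stmt14_general γ ι δ nubar ρ T hγ hnubar hρ D hD hDpos q ψ₀ ψ₁ ψ₂ ψ₃ hq hψ₀ hψ₁ hψ₂ hψ₃ A hA hden
end

section
/- Let γ > 0 with γ ≠ 1, ι ∈ ℝ, δ ∈ ℝ, ν̄ > 0, ρ ∈ (−1,1), T > 0, and assume D′ := (1−γ)(2ριδν̄ + δ²ν̄²) − ι²γ > 0. Set q = ν̄²(ρ² + γ(1−ρ²)) (which is positive), ψ₀ = (ιγ − (1−γ)δν̄ρ)/q, ψ₁ = √(γD′)/q, ψ₂ = √(D′)/(2√γ), and define A₁(t) = ψ₀ + ψ₁ tan( ψ₂(T−t) − arctan(ψ₀/ψ₁) ). Then A₁(T) = 0, and at every t ∈ [0,T] for which cos( ψ₂(T−t) − arctan(ψ₀/ψ₁) ) ≠ 0, the function A₁ is differentiable at t and satisfies A₁′(t) − ι A₁(t) + (1/2)ν̄² A₁(t)² + ((1−γ)/(2γ))( δ² + 2ρδν̄ A₁(t) + ρ²ν̄² A₁(t)² ) = 0. -/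
/-!
The right-hand side of the Riccati equation is a quadratic in `A` with leading coefficient
`-q/(2γ)`; when `D' > 0` its discriminant is negative and completing the square writes it as
`-(q/(2γ)) ((A - ψ₀)² + ψ₁²)`. A shifted, scaled tangent `f = p + r tan(ω(T - t) - φ)` has
`f' = -rω (1 + tan²) = -(ω/r) ((f - p)² + r²)`, so with `p = ψ₀`, `r = ψ₁` and
`ω = q ψ₁/(2γ) = ψ₂` it solves the equation wherever the cosine does not vanish, and the phase
`arctan(ψ₀/ψ₁)` makes it vanish at `t = T`.
-/

open Real

theorem hasDerivAt_tan_mul_sub {ω T φ t : ℝ} (hcos : cos (ω * (T - t) - φ) ≠ 0) :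
    HasDerivAt (fun s => tan (ω * (T - s) - φ))
      (-ω * (1 + tan (ω * (T - t) - φ) ^ 2)) t := by
  have hinner : HasDerivAt (fun s => ω * (T - s) - φ) (-ω) t := by
    simpa using (((hasDerivAt_id t).const_sub T).const_mul ω).sub_const φ
  have h := (hasDerivAt_tan hcos).comp t hinner
  rw [one_div, ← inv_one_add_tan_sq hcos, inv_inv, mul_comm] at h
  exact h

theorem hasDerivAt_add_mul_tan_riccati {α p r T φ t : ℝ}
    (hcos : cos (α * r * (T - t) - φ) ≠ 0) :
    HasDerivAt (fun s => p + r * tan (α * r * (T - s) - φ))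
      (-α * ((r * tan (α * r * (T - t) - φ)) ^ 2 + r ^ 2)) t :=
  (((hasDerivAt_tan_mul_sub hcos).const_mul r).const_add p).congr_deriv (by ring)

theorem add_mul_tan_neg_arctan_div {p r : ℝ} (hr : r ≠ 0) :
    p + r * tan (-arctan (p / r)) = 0 := by
  rw [tan_neg, tan_arctan]
  field_simp
  ring

theorem riccati_rhs_eq_neg_mul_sq_add_sq {γ ι δ nubar ρ D' q ψ₀ ψ₁ : ℝ} (hγ : γ ≠ 0)
    (hq0 : q ≠ 0) (hq : q = nubar ^ 2 * (ρ ^ 2 + γ * (1 - ρ ^ 2)))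
    (hD' : D' = (1 - γ) * (2 * ρ * ι * δ * nubar + δ ^ 2 * nubar ^ 2) - ι ^ 2 * γ)
    (hψ₀ : ψ₀ = (ι * γ - (1 - γ) * δ * nubar * ρ) / q) (hψ₁ : ψ₁ ^ 2 = γ * D' / q ^ 2)
    (x : ℝ) :
    ι * x - (1 / 2) * nubar ^ 2 * x ^ 2
        - ((1 - γ) / (2 * γ)) * (δ ^ 2 + 2 * ρ * δ * nubar * x + ρ ^ 2 * nubar ^ 2 * x ^ 2)
      = -(q / (2 * γ)) * ((x - ψ₀) ^ 2 + ψ₁ ^ 2) := by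
  rw [hψ₁, hψ₀, hD']
  field_simp
  rw [hq]
  ring

theorem stmt15_general (γ ι δ nubar ρ T : ℝ) (hγ : 0 < γ) (hnubar : 0 < nubar)
    (hρ : ρ ∈ Set.Ioo (-1 : ℝ) 1)
    (D' : ℝ) (hD' : D' = (1 - γ) * (2 * ρ * ι * δ * nubar + δ^2 * nubar^2) - ι^2 * γ)
    (hD'pos : 0 < D')
    (q ψ₀ ψ₁ ψ₂ : ℝ)
    (hq : q = nubar^2 * (ρ^2 + γ * (1 - ρ^2)))
    (hψ₀ : ψ₀ = (ι * γ - (1 - γ) * δ * nubar * ρ) / q)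
    (hψ₁ : ψ₁ = Real.sqrt (γ * D') / q)
    (hψ₂ : ψ₂ = Real.sqrt D' / (2 * Real.sqrt γ))
    (A : ℝ → ℝ)
    (hA : ∀ t : ℝ, A t =
      ψ₀ + ψ₁ * Real.tan (ψ₂ * (T - t) - Real.arctan (ψ₀ / ψ₁))) :
    A T = 0 ∧
    ∀ t ∈ Set.Icc (0 : ℝ) T,
      Real.cos (ψ₂ * (T - t) - Real.arctan (ψ₀ / ψ₁)) ≠ 0 →
      DifferentiableAt ℝ A t ∧
      deriv A t - ι * A t + (1/2) * nubar^2 * (A t)^2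
        + ((1 - γ) / (2 * γ)) * (δ^2 + 2 * ρ * δ * nubar * A t + ρ^2 * nubar^2 * (A t)^2)
        = 0 := by
  have hq_pos : 0 < q := by
    have hρ_sq : ρ ^ 2 < 1 := (sq_lt_one_iff_abs_lt_one ρ).2 (abs_lt.2 hρ)
    rw [hq]
    exact mul_pos (by positivity) (add_pos_of_nonneg_of_pos (sq_nonneg ρ)
      (mul_pos hγ (sub_pos.2 hρ_sq)))
  have hψ₁_pos : 0 < ψ₁ := by rw [hψ₁]; positivity
  have hψ₁_sq : ψ₁ ^ 2 = γ * D' / q ^ 2 := by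
    rw [hψ₁, div_pow, sq_sqrt (by positivity)]
  have hψ₂_eq : ψ₂ = q / (2 * γ) * ψ₁ := by
    rw [hψ₂, hψ₁, sqrt_mul hγ.le]
    field_simp
    rw [sq_sqrt hγ.le]
  obtain rfl : A = fun s => ψ₀ + ψ₁ * tan (q / (2 * γ) * ψ₁ * (T - s) - arctan (ψ₀ / ψ₁)) := by
    funext s
    rw [hA, hψ₂_eq]
  rw [hψ₂_eq]
  refine ⟨?_, fun t _ hcos => ?_⟩
  · simpa using add_mul_tan_neg_arctan_div (p := ψ₀) hψ₁_pos.ne'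
  · have hderiv := hasDerivAt_add_mul_tan_riccati (p := ψ₀) hcos
    refine ⟨hderiv.differentiableAt, ?_⟩
    rw [hderiv.deriv]
    linear_combination -riccati_rhs_eq_neg_mul_sq_add_sq hγ.ne' hq_pos.ne' hq hD' hψ₀ hψ₁_sq
      (ψ₀ + ψ₁ * tan (q / (2 * γ) * ψ₁ * (T - t) - arctan (ψ₀ / ψ₁)))

/-- Tangent-form (blow-up) solution (17) of the Riccati ODE (15): when the
well-posedness condition fails, i.e. `D′ = (1−γ)(2ριδν̄ + δ²ν̄²) − ι²γ > 0`, the function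
`A₁(t) = ψ₀ + ψ₁ tan(ψ₂(T−t) − arctan(ψ₀/ψ₁))` satisfies `A₁(T) = 0` and the Riccati
equation at every `t ∈ [0,T]` where the cosine does not vanish. -/
theorem stmt15 (γ ι δ nubar ρ T : ℝ) (hγ : 0 < γ) (hγ1 : γ ≠ 1) (hnubar : 0 < nubar)
    (hρ : ρ ∈ Set.Ioo (-1 : ℝ) 1) (hT : 0 < T)
    (D' : ℝ) (hD' : D' = (1 - γ) * (2 * ρ * ι * δ * nubar + δ^2 * nubar^2) - ι^2 * γ)
    (hD'pos : 0 < D')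
    (q ψ₀ ψ₁ ψ₂ : ℝ)
    (hq : q = nubar^2 * (ρ^2 + γ * (1 - ρ^2)))
    (hψ₀ : ψ₀ = (ι * γ - (1 - γ) * δ * nubar * ρ) / q)
    (hψ₁ : ψ₁ = Real.sqrt (γ * D') / q)
    (hψ₂ : ψ₂ = Real.sqrt D' / (2 * Real.sqrt γ))
    (A : ℝ → ℝ)
    (hA : ∀ t : ℝ, A t =
      ψ₀ + ψ₁ * Real.tan (ψ₂ * (T - t) - Real.arctan (ψ₀ / ψ₁))) :
    A T = 0 ∧
    ∀ t ∈ Set.Icc (0 : ℝ) T,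
      Real.cos (ψ₂ * (T - t) - Real.arctan (ψ₀ / ψ₁)) ≠ 0 →
      DifferentiableAt ℝ A t ∧
      deriv A t - ι * A t + (1/2) * nubar^2 * (A t)^2
        + ((1 - γ) / (2 * γ)) * (δ^2 + 2 * ρ * δ * nubar * A t + ρ^2 * nubar^2 * (A t)^2)
        = 0 :=
  stmt15_general γ ι δ nubar ρ T hγ hnubar hρ D' hD' hD'pos q ψ₀ ψ₁ ψ₂ hq hψ₀ hψ₁ hψ₂ A hA
end
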